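/- arXiv:1210.0066 — 2 statements merged into one kernel-verified Lean document; each statement's English description precedes it below -/
import Mathlib

section
/- Let F_ε(x)=f(x)+λΣ_{i=1}^n h_{u_ε}(x_i) with u_ε=(ε/(λn))^{1/q}. Then 0 ≤ F_ε(x) − F(x) ≤ ε for all x∈ℝⁿ, where F(x)=f(x)+λ‖x‖_p^p. -/
/-- h_u(t) = inf_{0<s≤u} p(|t|s - s^q/q). -/
noncomputable def hApprox (p q u t : ℝ) : ℝ :=
  sInf ((fun s : ℝ => p * (|t| * s - s ^ q / q)) '' Set.Ioc 0 u)

/-!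
For `0 < p < 1` the conjugate exponent `q = p / (p - 1)` is negative, and weighted AM-GM gives the
reverse Young inequality `|t| ^ p ≤ p * (|t| * s - s ^ q / q)` for every `s > 0`, with equality at
`s = |t| ^ (p - 1)`. Hence `h_u(t) ≥ |t| ^ p`, and the infimum over `s ≤ u` misses `|t| ^ p` by at
most `(1 - p) * u ^ q`: either the minimiser is admissible, or `s = u` already does the job.
The choice of `u_ε` makes `λ n u_ε ^ q = ε`.
-/

open Finset

lemma sub_one_mul_eq_of_one_div_add_one_div_eq_one {p q : ℝ} (hp : 0 < p) (hp1 : p < 1)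
    (hq : 1 / p + 1 / q = 1) : (p - 1) * q = p := by
  have hq0 : q ≠ 0 := by
    rintro rfl
    simp only [div_zero, add_zero, one_div, inv_eq_one] at hq
    linarith
  field_simp at hq
  linarith

lemma rpow_le_mul_add_mul_rpow {p q a s : ℝ} (hp : 0 ≤ p) (hp1 : p ≤ 1) (hpq : (p - 1) * q = p)
    (ha : 0 ≤ a) (hs : 0 < s) : a ^ p ≤ p * (a * s) + (1 - p) * s ^ q := by
  have hprod : (a * s) ^ p * (s ^ q) ^ (1 - p) = a ^ p := by
    rw [Real.mul_rpow ha hs.le, ← Real.rpow_mul hs.le, mul_assoc, ← Real.rpow_add hs,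
      show p + q * (1 - p) = 0 by linarith, Real.rpow_zero, mul_one]
  rw [← hprod]
  exact Real.geom_mean_le_arith_mean2_weighted hp (by linarith) (mul_nonneg ha hs.le)
    (Real.rpow_nonneg hs.le q) (by ring)

lemma mul_sub_rpow_div_eq_of_sub_one_mul_eq {p q : ℝ} (hp : p ≠ 0) (hpq : (p - 1) * q = p)
    (a s : ℝ) : p * (a * s - s ^ q / q) = p * (a * s) + (1 - p) * s ^ q := by
  have hq0 : q ≠ 0 := by
    rintro rfl
    exact hp (by simpa using hpq.symm)
  have hpq' : p / q = p - 1 := by field_simp; linarith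
  calc p * (a * s - s ^ q / q) = p * (a * s) - p / q * s ^ q := by ring
    _ = _ := by rw [hpq']; ring

section hApprox

variable {p q u : ℝ}

lemma rpow_abs_le_mul_sub_rpow_div (hp : 0 < p) (hp1 : p < 1) (hpq : (p - 1) * q = p) (t : ℝ)
    {s : ℝ} (hs : 0 < s) : |t| ^ p ≤ p * (|t| * s - s ^ q / q) := by
  rw [mul_sub_rpow_div_eq_of_sub_one_mul_eq hp.ne' hpq]
  exact rpow_le_mul_add_mul_rpow hp.le hp1.le hpq (abs_nonneg t) hs

lemma rpow_abs_le_hApprox (hp : 0 < p) (hp1 : p < 1) (hpq : (p - 1) * q = p) (hu : 0 < u)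
    (t : ℝ) : |t| ^ p ≤ hApprox p q u t := by
  refine le_csInf ((Set.nonempty_Ioc.mpr hu).image _) ?_
  rintro _ ⟨s, hs, rfl⟩
  exact rpow_abs_le_mul_sub_rpow_div hp hp1 hpq t hs.1

lemma hApprox_le (hp : 0 < p) (hp1 : p < 1) (hpq : (p - 1) * q = p) (t : ℝ) {s : ℝ}
    (hs : s ∈ Set.Ioc 0 u) : hApprox p q u t ≤ p * (|t| * s) + (1 - p) * s ^ q := by
  rw [← mul_sub_rpow_div_eq_of_sub_one_mul_eq hp.ne' hpq]
  refine csInf_le ⟨|t| ^ p, ?_⟩ ⟨s, hs, rfl⟩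
  rintro _ ⟨s', hs', rfl⟩
  exact rpow_abs_le_mul_sub_rpow_div hp hp1 hpq t hs'.1

lemma hApprox_le_rpow_abs_add (hp : 0 < p) (hp1 : p < 1) (hpq : (p - 1) * q = p) (hu : 0 < u)
    (t : ℝ) : hApprox p q u t ≤ |t| ^ p + (1 - p) * u ^ q := by
  rcases (abs_nonneg t).eq_or_lt with ht | ht
  · calc hApprox p q u t ≤ p * (|t| * u) + (1 - p) * u ^ q := hApprox_le hp hp1 hpq t ⟨hu, le_rfl⟩
      _ = |t| ^ p + (1 - p) * u ^ q := by rw [← ht, Real.zero_rpow hp.ne']; ring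
  have hmul : |t| * |t| ^ (p - 1) = |t| ^ p := by
    rw [Real.rpow_sub_one ht.ne', mul_div_cancel₀ _ ht.ne']
  by_cases hopt : |t| ^ (p - 1) ≤ u
  · calc hApprox p q u t ≤ p * (|t| * |t| ^ (p - 1)) + (1 - p) * (|t| ^ (p - 1)) ^ q :=
          hApprox_le hp hp1 hpq t ⟨Real.rpow_pos_of_pos ht _, hopt⟩
      _ = |t| ^ p := by rw [← Real.rpow_mul ht.le, hpq, hmul]; ring
      _ ≤ |t| ^ p + (1 - p) * u ^ q :=
          le_add_of_nonneg_right (mul_nonneg (by linarith) (Real.rpow_nonneg hu.le q))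
  · have hau : |t| * u ≤ |t| ^ p := by
      calc |t| * u ≤ |t| * |t| ^ (p - 1) := by gcongr; exact (not_le.mp hopt).le
        _ = |t| ^ p := hmul
    calc hApprox p q u t ≤ p * (|t| * u) + (1 - p) * u ^ q := hApprox_le hp hp1 hpq t ⟨hu, le_rfl⟩
      _ ≤ |t| ^ p + (1 - p) * u ^ q := by
          gcongr
          nlinarith [mul_nonneg ht.le hu.le]

end hApprox

lemma Fin.sum_le_of_le_div {n : ℕ} {g : Fin n → ℝ} {c : ℝ} (hc : 0 ≤ c) (h : ∀ i, g i ≤ c / n) :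
    ∑ i, g i ≤ c := by
  rcases n.eq_zero_or_pos with rfl | hn
  · simpa using hc
  calc ∑ i, g i ≤ ∑ _i : Fin n, c / n := sum_le_sum fun i _ => h i
    _ = c := by simp [field]

theorem stmt_7_general (n : ℕ) (p q lam eps : ℝ) (hp : 0 < p) (hp1 : p < 1)
    (hq : 1 / p + 1 / q = 1) (hlam : 0 < lam) (heps : 0 < eps)
    (f : (Fin n → ℝ) → ℝ) (x : Fin n → ℝ) :
    0 ≤ (f x + lam * ∑ i, hApprox p q ((eps / (lam * n)) ^ (1 / q)) (x i)) -
          (f x + lam * ∑ i, |x i| ^ p) ∧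
      (f x + lam * ∑ i, hApprox p q ((eps / (lam * n)) ^ (1 / q)) (x i)) -
          (f x + lam * ∑ i, |x i| ^ p) ≤ eps := by
  have hpq := sub_one_mul_eq_of_one_div_add_one_div_eq_one hp hp1 hq
  have hq0 : q ≠ 0 := by rintro rfl; linarith [hpq]
  set u := (eps / (lam * n)) ^ (1 / q) with hu_def
  -- `u` is positive only when `n ≠ 0`, which an index `i : Fin n` witnesses.
  have hu (i : Fin n) : 0 < u ∧ u ^ q = eps / lam / n := by
    have hbase : 0 < eps / (lam * n) := by have := i.pos; positivity
    refine ⟨Real.rpow_pos_of_pos hbase _, ?_⟩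
    rw [hu_def, one_div, Real.rpow_inv_rpow hbase.le hq0, div_div]
  rw [show ∀ a b c : ℝ, (c + lam * a) - (c + lam * b) = lam * (a - b) by intros; ring,
    ← sum_sub_distrib]
  refine ⟨mul_nonneg hlam.le (sum_nonneg fun i _ => sub_nonneg.2 ?_), ?_⟩
  · exact rpow_abs_le_hApprox hp hp1 hpq (hu i).1 (x i)
  refine (le_div_iff₀' hlam).1 (Fin.sum_le_of_le_div (by positivity) fun i => ?_)
  calc hApprox p q u (x i) - |x i| ^ p ≤ (1 - p) * u ^ q := by
        linarith [hApprox_le_rpow_abs_add hp hp1 hpq (hu i).1 (x i)]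
    _ ≤ u ^ q := mul_le_of_le_one_left (Real.rpow_nonneg (hu i).1.le q) (by linarith)
    _ = eps / lam / n := (hu i).2

/-- With u_ε = (ε/(λn))^(1/q) and F_ε(x) = f(x) + λ Σ_i h_{u_ε}(x_i),
one has 0 ≤ F_ε(x) - F(x) ≤ ε where F(x) = f(x) + λ‖x‖_p^p. -/
theorem stmt_7 (n : ℕ) (hn : 1 ≤ n) (p q lam eps : ℝ) (hp : 0 < p) (hp1 : p < 1)
    (hq : 1 / p + 1 / q = 1) (hlam : 0 < lam) (heps : 0 < eps)
    (f : (Fin n → ℝ) → ℝ) (x : Fin n → ℝ) :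
    0 ≤ (f x + lam * ∑ i, hApprox p q ((eps / (lam * n)) ^ (1 / q)) (x i)) -
          (f x + lam * ∑ i, |x i| ^ p) ∧
      (f x + lam * ∑ i, hApprox p q ((eps / (lam * n)) ^ (1 / q)) (x i)) -
          (f x + lam * ∑ i, |x i| ^ p) ≤ eps :=
  stmt_7_general n p q lam eps hp hp1 hq hlam heps f x
end

section
/- Suppose f has L_f-Lipschitz gradient and is bounded below with infimum f̲. If x* is a first-order stationary point of F(x)=f(x)+λ‖x‖_p^p (i.e. x*_i ∂f/∂x_i(x*)+λp|x*_i|^p=0 for all i) and F(x*) ≤ F(x⁰)+ε for some x⁰∈ℝⁿ and ε≥0, then every nonzero entry satisfies |x*_i| ≥ (λp/√(2L_f[F(x⁰)+ε−f̲]))^{1/(1−p)}. -/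
/-!
A function with `L`-Lipschitz gradient satisfies the descent lemma
`f (x + v) ≤ f x + ⟪∇f x, v⟫ + L/2 ‖v‖²`; a gradient step `v = -∇f x / L` then gives
`‖∇f x‖² ≤ 2L (f x - inf f)`. Since the regulariser is nonnegative, `f x* ≤ F(x⁰) + ε`, so every
partial derivative of `f` at `x*` is at most `√(2L (F(x⁰) + ε - inf f))` in absolute value.
Stationarity says `|∂ᵢf(x*)| = λ p |x*ᵢ|^(p-1)` when `x*ᵢ ≠ 0`, and as `p - 1 < 0` this bounds
`|x*ᵢ|` from below.
-/

open InnerProductSpace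
open scoped Gradient RealInnerProductSpace

section LipschitzGradient

variable {E : Type*} [NormedAddCommGroup E] [InnerProductSpace ℝ E] [CompleteSpace E]
  {f : E → ℝ} {L : ℝ}

theorem hasDerivAt_comp_add_smul (hf : Differentiable ℝ f) (x v : E) (t : ℝ) :
    HasDerivAt (fun s : ℝ => f (x + s • v)) ⟪∇ f (x + t • v), v⟫ t := by
  have hline : HasDerivAt (fun s : ℝ => x + s • v) v t := by
    simpa using ((hasDerivAt_id t).smul_const v).const_add x
  rw [inner_gradient_left]
  exact (hf _).hasFDerivAt.comp_hasDerivAt t hline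

theorem inner_gradient_add_smul_sub_le
    (hlip : ∀ a b : E, ‖∇ f a - ∇ f b‖ ≤ L * ‖a - b‖) (x v : E) {t : ℝ} (ht : 0 ≤ t) :
    ⟪∇ f (x + t • v) - ∇ f x, v⟫ ≤ L * t * ‖v‖ ^ 2 :=
  calc ⟪∇ f (x + t • v) - ∇ f x, v⟫
      ≤ ‖∇ f (x + t • v) - ∇ f x‖ * ‖v‖ := real_inner_le_norm _ _
    _ ≤ L * ‖x + t • v - x‖ * ‖v‖ := by gcongr; exact hlip _ _
    _ = L * t * ‖v‖ ^ 2 := by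
        rw [add_sub_cancel_left, norm_smul, Real.norm_of_nonneg ht]; ring

theorem le_add_inner_gradient_add_sq (hf : Differentiable ℝ f)
    (hlip : ∀ a b : E, ‖∇ f a - ∇ f b‖ ≤ L * ‖a - b‖) (x v : E) :
    f (x + v) ≤ f x + ⟪∇ f x, v⟫ + L / 2 * ‖v‖ ^ 2 := by
  let B : ℝ → ℝ := fun t => f x + t * ⟪∇ f x, v⟫ + L / 2 * t ^ 2 * ‖v‖ ^ 2
  have hB : ∀ t, HasDerivAt B (⟪∇ f x, v⟫ + L * t * ‖v‖ ^ 2) t := fun t => by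
    refine ((((hasDerivAt_id t).mul_const ⟪∇ f x, v⟫).const_add (f x)).add
      (((hasDerivAt_pow 2 t).const_mul (L / 2)).mul_const (‖v‖ ^ 2))).congr_deriv ?_
    simp only [Nat.cast_ofNat, Nat.add_one_sub_one, pow_one]
    ring
  have hfB := image_le_of_deriv_right_le_deriv_boundary (a := 0) (b := 1)
    (fun t _ => (hasDerivAt_comp_add_smul hf x v t).continuousAt.continuousWithinAt)
    (fun t _ => (hasDerivAt_comp_add_smul hf x v t).hasDerivWithinAt)
    (by simp [B]) (fun t _ => (hB t).continuousAt.continuousWithinAt)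
    (fun t _ => (hB t).hasDerivWithinAt)
    (fun t ht => by
      have := inner_gradient_add_smul_sub_le hlip x v ht.1
      rw [inner_sub_left] at this
      linarith)
    (Set.right_mem_Icc.2 zero_le_one)
  simpa [B] using hfB

theorem sq_norm_gradient_le (hf : Differentiable ℝ f) (hL : 0 < L)
    (hlip : ∀ a b : E, ‖∇ f a - ∇ f b‖ ≤ L * ‖a - b‖) {m : ℝ} (hm : ∀ y, m ≤ f y) (x : E) :
    ‖∇ f x‖ ^ 2 ≤ 2 * L * (f x - m) := by
  have hstep := le_add_inner_gradient_add_sq hf hlip x (-L⁻¹ • ∇ f x)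
  rw [inner_smul_right, real_inner_self_eq_norm_sq, norm_smul, norm_neg, norm_inv,
    Real.norm_of_nonneg hL.le] at hstep
  have hdescent : f (x + -L⁻¹ • ∇ f x) ≤ f x - ‖∇ f x‖ ^ 2 / (2 * L) := by
    convert hstep using 1
    field_simp
    ring
  calc ‖∇ f x‖ ^ 2 = 2 * L * (‖∇ f x‖ ^ 2 / (2 * L)) := by field_simp
    _ ≤ 2 * L * (f x - m) := by gcongr; linarith [hm (x + -L⁻¹ • ∇ f x)]

end LipschitzGradient

theorem abs_fderiv_single_le_norm_gradient {ι : Type*} [Fintype ι] [DecidableEq ι]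
    (f : EuclideanSpace ℝ ι → ℝ) (x : EuclideanSpace ℝ ι) (i : ι) :
    |fderiv ℝ f x (EuclideanSpace.single i 1)| ≤ ‖∇ f x‖ := by
  rw [← inner_gradient_left]
  simpa using abs_real_inner_le_norm (∇ f x) (EuclideanSpace.single i (1 : ℝ))

theorem div_rpow_one_div_one_sub_le_abs {p a g S y : ℝ} (hp1 : p < 1) (ha : 0 ≤ a)
    (hy : y ≠ 0) (hg : |g| ≤ S) (h : y * g + a * |y| ^ p = 0) :
    (a / S) ^ (1 / (1 - p)) ≤ |y| := by
  have hy' : 0 < |y| := abs_pos.2 hy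
  have hS : 0 ≤ S := (abs_nonneg g).trans hg
  have habs : |y| * |g| = a * |y| ^ p := by
    rw [← abs_mul, eq_neg_of_add_eq_zero_left h, abs_neg, abs_of_nonneg (by positivity)]
  have hsplit : |y| = |y| ^ (1 - p) * |y| ^ p := by
    rw [← Real.rpow_add hy']; simp
  have ha_le : a ≤ |y| ^ (1 - p) * S := by
    refine le_of_mul_le_mul_right ?_ (Real.rpow_pos_of_pos hy' p)
    calc a * |y| ^ p = |y| * |g| := habs.symm
      _ ≤ |y| * S := by gcongr
      _ = |y| ^ (1 - p) * S * |y| ^ p := by nth_rewrite 1 [hsplit]; ring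
  rw [one_div, Real.rpow_inv_le_iff_of_pos (div_nonneg ha hS) hy'.le (by linarith)]
  exact div_le_of_le_mul₀ hS (by positivity) ha_le

theorem stmt_11_general (n : ℕ) (p lam Lf eps fbar : ℝ) (hp : 0 < p) (hp1 : p < 1)
    (hlam : 0 < lam) (hLf : 0 < Lf)
    (f : EuclideanSpace ℝ (Fin n) → ℝ) (hf : Differentiable ℝ f)
    (hlip : ∀ a b : EuclideanSpace ℝ (Fin n), ‖gradient f a - gradient f b‖ ≤ Lf * ‖a - b‖)
    (hinf : IsGLB (Set.range f) fbar)
    (x x0 : EuclideanSpace ℝ (Fin n))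
    (hstat : ∀ i, x i * fderiv ℝ f x (EuclideanSpace.single i 1) + lam * p * |x i| ^ p = 0)
    (hF : f x + lam * ∑ i, |x i| ^ p ≤ f x0 + lam * (∑ i, |x0 i| ^ p) + eps) :
    ∀ i, x i ≠ 0 →
      (lam * p / Real.sqrt (2 * Lf * (f x0 + lam * (∑ i, |x0 i| ^ p) + eps - fbar)))
          ^ ((1 : ℝ) / (1 - p)) ≤ |x i| := by
  intro i hxi
  have hbdd : ∀ y, fbar ≤ f y := fun y => hinf.1 ⟨y, rfl⟩
  have hfx : f x ≤ f x0 + lam * (∑ i, |x0 i| ^ p) + eps := by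
    refine le_trans (le_add_of_nonneg_right ?_) hF
    exact mul_nonneg hlam.le (Finset.sum_nonneg fun j _ => by positivity)
  have hpartial : |fderiv ℝ f x (EuclideanSpace.single i 1)|
      ≤ Real.sqrt (2 * Lf * (f x0 + lam * (∑ i, |x0 i| ^ p) + eps - fbar)) := by
    refine (abs_fderiv_single_le_norm_gradient f x i).trans ?_
    rw [← abs_norm]
    refine Real.abs_le_sqrt ((sq_norm_gradient_le hf hLf hlip hbdd x).trans ?_)
    gcongr
  exact div_rpow_one_div_one_sub_le_abs hp1 (by positivity) hxi hpartial (hstat i)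

/-- Lower bound on nonzero entries of first-order stationary points x* of
F(x) = f(x) + λ‖x‖_p^p with F(x*) ≤ F(x⁰) + ε, when ∇f is L_f-Lipschitz and
f is bounded below with infimum fbar. -/
theorem stmt_11 (n : ℕ) (p lam Lf eps fbar : ℝ) (hp : 0 < p) (hp1 : p < 1)
    (hlam : 0 < lam) (hLf : 0 < Lf) (heps : 0 ≤ eps)
    (f : EuclideanSpace ℝ (Fin n) → ℝ) (hf : Differentiable ℝ f)
    (hlip : ∀ a b : EuclideanSpace ℝ (Fin n), ‖gradient f a - gradient f b‖ ≤ Lf * ‖a - b‖)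
    (hinf : IsGLB (Set.range f) fbar)
    (x x0 : EuclideanSpace ℝ (Fin n))
    (hstat : ∀ i, x i * fderiv ℝ f x (EuclideanSpace.single i 1) + lam * p * |x i| ^ p = 0)
    (hF : f x + lam * ∑ i, |x i| ^ p ≤ f x0 + lam * (∑ i, |x0 i| ^ p) + eps) :
    ∀ i, x i ≠ 0 →
      (lam * p / Real.sqrt (2 * Lf * (f x0 + lam * (∑ i, |x0 i| ^ p) + eps - fbar)))
          ^ ((1 : ℝ) / (1 - p)) ≤ |x i| :=
  stmt_11_general n p lam Lf eps fbar hp hp1 hlam hLf f hf hlip hinf x x0 hstat hF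
end
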